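/- (Explicit SVD of the diffusion matrix under Open boundary conditions.) Let n ≥ 1 and let S_d = S_d(n; 1, 1). Define U ∈ ℝ^{n×n} by U_{i,j} = √(2/(n+1))·sin(π(n−j+1)i/(n+1)); define V ∈ ℝ^{(n+1)×(n+1)} by V_{i,j} = √(2/(n+1))·cos(π(n−j+1)(2i−1)/(2(n+1))) for 1 ≤ j ≤ n, with every entry of column n+1 of V equal to 1/√(n+1); and let Σ be the n × (n+1) matrix with Σ_{j,j} = 2 sin(π(n−j+1)/(2(n+1))) for 1 ≤ j ≤ n and all other entries 0. Then U and V are orthogonal matrices and S_d = U Σ Vᵀ. In particular S_d has full row rank n. -/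

import Mathlib

open Matrix Real
open scoped Matrix

noncomputable section

/-- The diffusion-only stoichiometry matrix `S_d(n; b₁, b₂)`. -/
def Sd (n : ℕ) (b₁ b₂ : ℝ) : Matrix (Fin n) (Fin (n+1)) ℝ :=
  Matrix.of fun i j =>
    if (j : ℕ) = (i : ℕ) ∧ (i : ℕ) = 0 then b₁
    else if (j : ℕ) = (i : ℕ) then 1
    else if (j : ℕ) = (i : ℕ) + 1 ∧ (i : ℕ) = n - 1 then -b₂
    else if (j : ℕ) = (i : ℕ) + 1 then (-1 : ℝ)
    else 0

/-!
The telescoping identity `2 sin(θ/2) ∑_{k<N} cos(α + kθ) = sin(α + (N - ½)θ) - sin(α - θ/2)`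
evaluates the cosine sums that, after the product-to-sum formulas, express the discrete
orthogonality of the DST-I basis (the columns of `U`) and of the DCT-II basis (the columns
of `V`). As `U` and `V` are square, `UᵀU = 1` and `VᵀV = 1` also give `UUᵀ = 1` and `VVᵀ = 1`.
Row `i` of `S_d V` is the difference of rows `i` and `i + 1` of `V`, and the sum-to-product
formula turns each such difference of cosines into the matching sine column of `U` times the
singular value `2 sin(πp/(2(n+1)))`; hence `S_d V = UΣ` and `S_d = S_d V Vᵀ = UΣVᵀ`.
Full row rank follows from an explicit right inverse of `S_d`, the upper triangular matrix of
ones.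
-/

open Finset

lemma two_mul_sin_half_mul_sum_range_cos (α θ : ℝ) (N : ℕ) :
    2 * sin (θ / 2) * ∑ k ∈ range N, cos (α + k * θ)
      = sin (α + (N - 1 / 2) * θ) - sin (α - θ / 2) := by
  induction N with
  | zero => simp only [range_zero, sum_empty, mul_zero, CharP.cast_eq_zero]; ring_nf
  | succ N ih =>
    rw [sum_range_succ, mul_add, ih, two_mul_sin_mul_cos,
      show θ / 2 - (α + N * θ) = -(α + (N - 1 / 2) * θ) by ring, sin_neg]
    push_cast
    ring_nf

lemma sin_pi_mul_div_ne_zero {N : ℕ} (hN : N ≠ 0) {m : ℤ} (hm : ¬ (N : ℤ) ∣ m) :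
    sin (π * m / N) ≠ 0 := by
  rw [Ne, sin_eq_zero_iff]
  rintro ⟨k, hk⟩
  apply hm
  refine ⟨k, ?_⟩
  have hN' : (N : ℝ) ≠ 0 := by exact_mod_cast hN
  field_simp at hk
  exact_mod_cast (by linarith : (m : ℝ) = N * k)

lemma sum_range_cos_int_mul_div {N : ℕ} (hN : N ≠ 0) {m : ℤ} (hm : ¬ (2 * N : ℤ) ∣ m) :
    ∑ k ∈ range N, cos (π * m * k / N) = (1 - cos (m * π)) / 2 := by
  set θ := π * m / N
  have hs : sin (θ / 2) ≠ 0 := by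
    simpa [θ, div_div, mul_comm (N : ℝ)] using sin_pi_mul_div_ne_zero (N := 2 * N) (by omega)
      (by exact_mod_cast hm)
  have hN' : (N : ℝ) ≠ 0 := by exact_mod_cast hN
  have key := two_mul_sin_half_mul_sum_range_cos 0 θ N
  rw [show (0 : ℝ) + (N - 1 / 2) * θ = m * π - θ / 2 by simp only [θ]; field_simp; ring,
    sin_sub, sin_int_mul_pi, zero_sub, sin_neg] at key
  simp only [zero_add] at key
  rw [show (fun k : ℕ => cos (π * m * k / N)) = fun k : ℕ => cos (k * θ) by
    ext k; simp only [θ]; ring_nf]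
  field_simp
  apply mul_left_cancel₀ hs
  linear_combination key

lemma sum_range_cos_int_mul_odd_div (N : ℕ) {m : ℤ} (hm : ¬ (2 * N : ℤ) ∣ m) :
    ∑ k ∈ range N, cos (π * m * (2 * k + 1) / (2 * N)) = 0 := by
  rcases eq_or_ne N 0 with rfl | hN
  · simp
  set θ := π * m / N
  have hs : sin (θ / 2) ≠ 0 := by
    simpa [θ, div_div, mul_comm (N : ℝ)] using sin_pi_mul_div_ne_zero (N := 2 * N) (by omega)
      (by exact_mod_cast hm)
  have hN' : (N : ℝ) ≠ 0 := by exact_mod_cast hN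
  have key := two_mul_sin_half_mul_sum_range_cos (θ / 2) θ N
  rw [show θ / 2 + (N - 1 / 2) * θ = m * π by simp only [θ]; field_simp; ring,
    sub_self, sin_int_mul_pi, sin_zero, sub_zero] at key
  rw [show (fun k : ℕ => cos (π * m * (2 * k + 1) / (2 * N)))
      = fun k : ℕ => cos (θ / 2 + k * θ) by ext k; simp only [θ]; field_simp; ring_nf]
  exact (mul_eq_zero.mp key).resolve_left (mul_ne_zero two_ne_zero hs)

lemma sum_range_sin_mul_sin (n : ℕ) {p q : ℕ} (hp : 0 < p) (hpn : p ≤ n) (hq : 0 < q)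
    (hqn : q ≤ n) :
    ∑ i ∈ range n, sin (π * p * (i + 1) / (n + 1)) * sin (π * q * (i + 1) / (n + 1))
      = if p = q then ((n : ℝ) + 1) / 2 else 0 := by
  have hcos : ∀ m : ℤ, m ≠ 0 → |m| < 2 * (n + 1) →
      ∑ k ∈ range (n + 1), cos (π * m * k / (n + 1)) = (1 - cos (m * π)) / 2 := by
    intro m hm0 hm
    have h := sum_range_cos_int_mul_div (N := n + 1) (by omega) (m := m)
      fun hd => hm0 (Int.eq_zero_of_abs_lt_dvd hd (by push_cast; omega))
    push_cast at h
    exact h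
  have hprod : ∀ k : ℕ, sin (π * p * k / (n + 1)) * sin (π * q * k / (n + 1))
      = (cos (π * ((p - q : ℤ) : ℝ) * k / (n + 1))
          - cos (π * ((p + q : ℤ) : ℝ) * k / (n + 1))) / 2 := by
    intro k
    rw [eq_div_iff two_ne_zero, mul_comm, ← mul_assoc, two_mul_sin_mul_sin]
    push_cast
    ring_nf
  calc ∑ i ∈ range n, sin (π * p * (i + 1) / (n + 1)) * sin (π * q * (i + 1) / (n + 1))
      = ∑ k ∈ range (n + 1), sin (π * p * k / (n + 1)) * sin (π * q * k / (n + 1)) := by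
        simp [sum_range_succ']
    _ = ((∑ k ∈ range (n + 1), cos (π * ((p - q : ℤ) : ℝ) * k / (n + 1)))
          - ∑ k ∈ range (n + 1), cos (π * ((p + q : ℤ) : ℝ) * k / (n + 1))) / 2 := by
        simp only [hprod, ← sum_div, sum_sub_distrib]
    _ = if p = q then ((n : ℝ) + 1) / 2 else 0 := by
        rw [hcos (p + q) (by omega) (by rw [abs_lt]; omega)]
        split_ifs with hpq
        · subst hpq
          rw [show ((p + p : ℤ) : ℝ) * π = p * (2 * π) by push_cast; ring, cos_nat_mul_two_pi]
          simp
        · rw [hcos (p - q) (by omega) (by rw [abs_lt]; omega),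
            show ((p + q : ℤ) : ℝ) * π = ((p - q : ℤ) : ℝ) * π + q * (2 * π) by push_cast; ring,
            cos_add_nat_mul_two_pi]
          ring

lemma sum_range_cos_mul_cos (n : ℕ) {p q : ℕ} (hpn : p ≤ n) (hqn : q ≤ n) :
    ∑ i ∈ range (n + 1),
        cos (π * p * (2 * i + 1) / (2 * (n + 1))) * cos (π * q * (2 * i + 1) / (2 * (n + 1)))
      = if p = q then (if p = 0 then (n : ℝ) + 1 else ((n : ℝ) + 1) / 2) else 0 := by
  have hcos : ∀ m : ℤ, |m| < 2 * (n + 1) →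
      ∑ k ∈ range (n + 1), cos (π * m * (2 * k + 1) / (2 * (n + 1)))
        = if m = 0 then (n : ℝ) + 1 else 0 := by
    intro m hm
    split_ifs with hm0
    · simp [hm0]
    · have h := sum_range_cos_int_mul_odd_div (n + 1) (m := m)
        fun hd => hm0 (Int.eq_zero_of_abs_lt_dvd hd (by push_cast; omega))
      push_cast at h
      exact h
  have hprod : ∀ k : ℕ,
      cos (π * p * (2 * k + 1) / (2 * (n + 1))) * cos (π * q * (2 * k + 1) / (2 * (n + 1)))
      = (cos (π * ((p - q : ℤ) : ℝ) * (2 * k + 1) / (2 * (n + 1)))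
          + cos (π * ((p + q : ℤ) : ℝ) * (2 * k + 1) / (2 * (n + 1)))) / 2 := by
    intro k
    rw [eq_div_iff two_ne_zero, mul_comm, ← mul_assoc, two_mul_cos_mul_cos]
    push_cast
    ring_nf
  simp only [hprod, ← sum_div, sum_add_distrib]
  rw [hcos _ (by rw [abs_lt]; omega), hcos _ (by rw [abs_lt]; omega)]
  split_ifs <;> first | omega | ring

def dstMatrix (n : ℕ) : Matrix (Fin n) (Fin n) ℝ := Matrix.of fun i j =>
  Real.sqrt (2 / ((n : ℝ) + 1)) *
    Real.sin (π * ((n : ℝ) - (j : ℕ)) * (((i : ℕ) : ℝ) + 1) / ((n : ℝ) + 1))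

def dctMatrix (n : ℕ) : Matrix (Fin (n+1)) (Fin (n+1)) ℝ := Matrix.of fun i j =>
  if (j : ℕ) = n then 1 / Real.sqrt ((n : ℝ) + 1)
  else Real.sqrt (2 / ((n : ℝ) + 1)) *
    Real.cos (π * ((n : ℝ) - (j : ℕ)) * (2 * ((i : ℕ) : ℝ) + 1) / (2 * ((n : ℝ) + 1)))

def sdSigma (n : ℕ) : Matrix (Fin n) (Fin (n+1)) ℝ := Matrix.of fun i j =>
  if (i : ℕ) = (j : ℕ) then
    2 * Real.sin (π * ((n : ℝ) - (i : ℕ)) / (2 * ((n : ℝ) + 1)))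
  else 0

lemma dstMatrix_apply (n : ℕ) (i j : Fin n) :
    dstMatrix n i j
      = √(2 / (n + 1)) * sin (π * ((n - j : ℕ) : ℝ) * ((i : ℕ) + 1) / (n + 1)) := by
  rw [dstMatrix, of_apply, Nat.cast_sub j.isLt.le]

lemma dctMatrix_apply (n : ℕ) (i j : Fin (n + 1)) :
    dctMatrix n i j = (if (j : ℕ) = n then 1 / √(n + 1) else √(2 / (n + 1))) *
      cos (π * ((n - j : ℕ) : ℝ) * (2 * (i : ℕ) + 1) / (2 * (n + 1))) := by
  rw [dctMatrix, of_apply, Nat.cast_sub (Nat.le_of_lt_succ j.isLt)]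
  split_ifs with hj
  · simp [hj]
  · rfl

lemma dstMatrix_transpose_mul_self (n : ℕ) : (dstMatrix n)ᵀ * dstMatrix n = 1 := by
  ext a b
  have hsq : √(2 / (n + 1)) * √(2 / (n + 1)) = 2 / ((n : ℝ) + 1) :=
    mul_self_sqrt (by positivity)
  have hab : n - (a : ℕ) = n - b ↔ a = b := by rw [Fin.ext_iff]; omega
  calc ((dstMatrix n)ᵀ * dstMatrix n) a b
      = 2 / (n + 1) * ∑ i ∈ range n, sin (π * ((n - a : ℕ) : ℝ) * (i + 1) / (n + 1))
          * sin (π * ((n - b : ℕ) : ℝ) * (i + 1) / (n + 1)) := by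
        rw [mul_apply, mul_sum, ← hsq, ← Fin.sum_univ_eq_sum_range]
        refine sum_congr rfl fun i _ => ?_
        simp only [transpose_apply, dstMatrix_apply]
        ring
    _ = (1 : Matrix (Fin n) (Fin n) ℝ) a b := by
        rw [sum_range_sin_mul_sin n (by omega) (by omega) (by omega) (by omega), one_apply]
        rcases eq_or_ne a b with rfl | hne
        · rw [if_pos rfl, if_pos rfl]
          field_simp
        · rw [if_neg (mt hab.mp hne), if_neg hne, mul_zero]

lemma dctMatrix_transpose_mul_self (n : ℕ) : (dctMatrix n)ᵀ * dctMatrix n = 1 := by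
  ext a b
  have hN : (0 : ℝ) < n + 1 := by positivity
  have hab : n - (a : ℕ) = n - b ↔ a = b := by rw [Fin.ext_iff]; omega
  calc ((dctMatrix n)ᵀ * dctMatrix n) a b
      = (if (a : ℕ) = n then 1 / √(n + 1) else √(2 / (n + 1)))
        * (if (b : ℕ) = n then 1 / √(n + 1) else √(2 / (n + 1)))
        * ∑ i ∈ range (n + 1), cos (π * ((n - a : ℕ) : ℝ) * (2 * i + 1) / (2 * (n + 1)))
          * cos (π * ((n - b : ℕ) : ℝ) * (2 * i + 1) / (2 * (n + 1))) := by
        rw [mul_apply, mul_sum, ← Fin.sum_univ_eq_sum_range]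
        refine sum_congr rfl fun i _ => ?_
        simp only [transpose_apply, dctMatrix_apply]
        ring
    _ = (1 : Matrix (Fin (n + 1)) (Fin (n + 1)) ℝ) a b := by
        rw [sum_range_cos_mul_cos n (by omega) (by omega), one_apply]
        rcases eq_or_ne a b with rfl | hne
        · have hsq : √(2 / (n + 1)) ^ 2 = 2 / ((n : ℝ) + 1) := sq_sqrt (by positivity)
          rw [if_pos rfl, if_pos rfl]
          split_ifs <;> first | omega | field_simp
          · rw [sq_sqrt hN.le]
          · rw [hsq]; field_simp
        · rw [if_neg (mt hab.mp hne), if_neg hne, mul_zero]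

lemma Sd_one_one_apply (n : ℕ) (i : Fin n) (l : Fin (n + 1)) :
    Sd n 1 1 i l = (if l = i.castSucc then 1 else 0) - if l = i.succ then 1 else 0 := by
  simp only [Sd, of_apply, Fin.ext_iff, Fin.val_castSucc, Fin.val_succ]
  split_ifs <;> first | omega | norm_num

lemma Sd_one_one_mul_apply {m : Type*} [Fintype m] (n : ℕ) (M : Matrix (Fin (n + 1)) m ℝ)
    (i : Fin n) (j : m) : (Sd n 1 1 * M) i j = M i.castSucc j - M i.succ j := by
  simp only [mul_apply, Sd_one_one_apply, sub_mul, ite_mul, one_mul, zero_mul, sum_sub_distrib,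
    sum_ite_eq', mem_univ, if_true]

lemma Sd_one_one_mul_upper_ones (n : ℕ) :
    Sd n 1 1 * Matrix.of (fun (l : Fin (n + 1)) (j : Fin n) => if (l : ℕ) ≤ j then (1 : ℝ) else 0)
      = 1 := by
  ext i j
  simp only [Sd_one_one_mul_apply, one_apply, Fin.ext_iff, of_apply, Fin.val_castSucc,
    Fin.val_succ]
  split_ifs <;> first | omega | norm_num

lemma rank_Sd_one_one (n : ℕ) : (Sd n 1 1).rank = n := by
  refine le_antisymm (by simpa using rank_le_card_height (Sd n 1 1)) ?_
  calc n = (1 : Matrix (Fin n) (Fin n) ℝ).rank := by simp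
    _ ≤ (Sd n 1 1).rank := by
      rw [← Sd_one_one_mul_upper_ones]
      exact rank_mul_le_left _ _

lemma Sd_one_one_mul_dctMatrix (n : ℕ) : Sd n 1 1 * dctMatrix n = dstMatrix n * sdSigma n := by
  ext i j
  rw [Sd_one_one_mul_apply, mul_apply]
  induction j using Fin.lastCases with
  | last =>
    have hσ : ∀ l : Fin n, sdSigma n l (Fin.last n) = 0 := fun l => if_neg (by simp [l.isLt.ne])
    simp [dctMatrix, hσ]
  | cast j =>
    have hσ : ∀ l : Fin n, sdSigma n l j.castSucc
        = if l = j then 2 * sin (π * ((n : ℝ) - (j : ℕ)) / (2 * ((n : ℝ) + 1))) else 0 := by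
      intro l
      simp only [sdSigma, of_apply, Fin.val_castSucc, ← Fin.ext_iff]
      split_ifs with h <;> simp [h]
    simp only [hσ, mul_ite, mul_zero, sum_ite_eq', mem_univ, if_true, dctMatrix, dstMatrix,
      of_apply, Fin.val_castSucc, Fin.val_succ, j.isLt.ne, if_false, ← mul_sub, cos_sub_cos]
    push_cast
    have h1 : (π * ((n : ℝ) - j) * (2 * i + 1) / (2 * (n + 1))
        + π * ((n : ℝ) - j) * (2 * (i + 1) + 1) / (2 * (n + 1))) / 2
        = π * ((n : ℝ) - j) * (i + 1) / (n + 1) := by field_simp; ring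
    have h2 : (π * ((n : ℝ) - j) * (2 * i + 1) / (2 * (n + 1))
        - π * ((n : ℝ) - j) * (2 * (i + 1) + 1) / (2 * (n + 1))) / 2
        = -(π * ((n : ℝ) - j) / (2 * (n + 1))) := by field_simp; ring
    rw [h1, h2, sin_neg]
    ring

-- Indices run from 0, whereas in the informal statement they run from 1.
theorem stmt13_general (n : ℕ) :
    let U : Matrix (Fin n) (Fin n) ℝ := Matrix.of fun i j =>
      Real.sqrt (2 / ((n : ℝ) + 1)) *
        Real.sin (π * ((n : ℝ) - (j : ℕ)) * (((i : ℕ) : ℝ) + 1) / ((n : ℝ) + 1))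
    let V : Matrix (Fin (n+1)) (Fin (n+1)) ℝ := Matrix.of fun i j =>
      if (j : ℕ) = n then 1 / Real.sqrt ((n : ℝ) + 1)
      else Real.sqrt (2 / ((n : ℝ) + 1)) *
        Real.cos (π * ((n : ℝ) - (j : ℕ)) * (2 * ((i : ℕ) : ℝ) + 1) / (2 * ((n : ℝ) + 1)))
    let Sig : Matrix (Fin n) (Fin (n+1)) ℝ := Matrix.of fun i j =>
      if (i : ℕ) = (j : ℕ) then
        2 * Real.sin (π * ((n : ℝ) - (i : ℕ)) / (2 * ((n : ℝ) + 1)))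
      else 0
    Uᵀ * U = 1 ∧ U * Uᵀ = 1 ∧ Vᵀ * V = 1 ∧ V * Vᵀ = 1 ∧
      Sd n 1 1 = U * Sig * Vᵀ ∧ (Sd n 1 1).rank = n := by
  have hU : (dstMatrix n)ᵀ * dstMatrix n = 1 := dstMatrix_transpose_mul_self n
  have hV : (dctMatrix n)ᵀ * dctMatrix n = 1 := dctMatrix_transpose_mul_self n
  have hV' : dctMatrix n * (dctMatrix n)ᵀ = 1 := mul_eq_one_comm.mp hV
  have hsvd : Sd n 1 1 = dstMatrix n * sdSigma n * (dctMatrix n)ᵀ := by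
    rw [← Sd_one_one_mul_dctMatrix, Matrix.mul_assoc, hV', Matrix.mul_one]
  exact ⟨hU, mul_eq_one_comm.mp hU, hV, hV', hsvd, rank_Sd_one_one n⟩

/-- explicit SVD of the diffusion matrix under Open boundary conditions.
Indices here run from 0, whereas in the informal statement they run from 1. -/
theorem stmt13 (n : ℕ) (hn : 1 ≤ n) :
    let U : Matrix (Fin n) (Fin n) ℝ := Matrix.of fun i j =>
      Real.sqrt (2 / ((n : ℝ) + 1)) *
        Real.sin (π * ((n : ℝ) - (j : ℕ)) * (((i : ℕ) : ℝ) + 1) / ((n : ℝ) + 1))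
    let V : Matrix (Fin (n+1)) (Fin (n+1)) ℝ := Matrix.of fun i j =>
      if (j : ℕ) = n then 1 / Real.sqrt ((n : ℝ) + 1)
      else Real.sqrt (2 / ((n : ℝ) + 1)) *
        Real.cos (π * ((n : ℝ) - (j : ℕ)) * (2 * ((i : ℕ) : ℝ) + 1) / (2 * ((n : ℝ) + 1)))
    let Sig : Matrix (Fin n) (Fin (n+1)) ℝ := Matrix.of fun i j =>
      if (i : ℕ) = (j : ℕ) then
        2 * Real.sin (π * ((n : ℝ) - (i : ℕ)) / (2 * ((n : ℝ) + 1)))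
      else 0
    Uᵀ * U = 1 ∧ U * Uᵀ = 1 ∧ Vᵀ * V = 1 ∧ V * Vᵀ = 1 ∧
      Sd n 1 1 = U * Sig * Vᵀ ∧ (Sd n 1 1).rank = n :=
  stmt13_general n
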